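/- arXiv:2508.19718 — 4 statements merged into one kernel-verified Lean document; each statement's English description precedes it below -/
import Mathlib

section
/- Assume ht I_m(A₁,…,Aₙ) ≥ n − m. Then there exists an invertible n×n matrix φ over R such that the matrix B := A·φ (whose columns B₁,…,Bₙ are R-linear combinations of the columns of A) satisfies ht I_m(B₁,…,B_k) ≥ k − m + 1 for every k = m+1,…,n−1. -/
/-!
Choose the columns `B_{k+1} = ∑ᵢ uᵢ Aᵢ` one at a time, keeping the stronger invariant
`ht I_t(B₁,…,B_k) ≥ min(k - t + 1, n - m)` for all `t ≤ m`. A prime `p ⊇ I_t(B₁,…,B_{k+1})`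
contains a minimal prime `q` of `I_t(B₁,…,B_k)`, and only finitely many such `q` are too small.
For those, the invariant for `t - 1` and the hypothesis on `A` give `q ⊉ I_{t-1}(B₁,…,B_k)` and
`q ⊉ I_m(A)`; over `Frac(R/q)` some `Aᵢ` is then independent of `t - 1` independent columns among
`B₁,…,B_k`, so the `t`-minors through the new column avoid `q` unless `u` lies in a certain
proper submodule of `Rⁿ`. Then `q ⊊ p` adds one to the height. By Nakayama, `Rⁿ` is not a finite
union of proper submodules when the residue field is infinite, so some `u` avoids all of them
and also keeps `φ` invertible.
-/

/-- The height of an ideal: the infimum of the heights of the primes containing it. -/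
noncomputable def idealHeight {R : Type*} [CommRing R] (I : Ideal R) : ℕ∞ :=
  ⨅ (p : PrimeSpectrum R) (_ : I ≤ p.asIdeal), Order.height p

/-- `rs` is a regular sequence on `R`: each entry is a nonzerodivisor modulo the ideal
generated by the earlier entries, and the entries generate a proper ideal. -/
def IsRegularSequence (R : Type*) [CommRing R] (rs : List R) : Prop :=
  (∀ i : Fin rs.length, ∀ a : R,
      rs.get i * a ∈ Ideal.span {z | z ∈ rs.take (i : ℕ)} →
      a ∈ Ideal.span {z | z ∈ rs.take (i : ℕ)}) ∧
  Ideal.span {z | z ∈ rs} ≠ ⊤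

/-- A local ring is Cohen–Macaulay if it admits a regular sequence in the maximal ideal
whose length equals the Krull dimension. -/
def IsCohenMacaulayLocalRing (R : Type*) [CommRing R] [IsLocalRing R] : Prop :=
  ∃ rs : List R, (∀ z ∈ rs, z ∈ IsLocalRing.maximalIdeal R) ∧
    IsRegularSequence R rs ∧ ((rs.length : ℕ∞) : WithBot ℕ∞) = ringKrullDim R

/-- `I_m(B₁,…,B_k)`: the ideal generated by the `m × m` minors of the submatrix of `B`
formed by the first `k` columns (columns taken in their original order). -/
def minorIdeal {R : Type*} [CommRing R] (m n : ℕ) (B : Fin n → (Fin m → R)) (k : ℕ) :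
    Ideal R :=
  Ideal.span {d | ∃ g : Fin m → Fin n, StrictMono g ∧ (∀ l, (g l : ℕ) < k) ∧
    d = Matrix.det (Matrix.of fun i l => B (g l) i)}

section LinearAlgebra

open Matrix

theorem linearIndependent_iff_exists_det_ne_zero {F κ : Type*} [Field F] [Fintype κ] {t : ℕ}
    (v : Fin t → κ → F) :
    LinearIndependent F v ↔ ∃ r : Fin t → κ, (of fun l c => v l (r c)).det ≠ 0 := by
  constructor
  · intro h
    have hcols : Submodule.span F (Set.range (of v).col) = ⊤ := by
      apply Submodule.eq_top_of_finrank_eq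
      rw [← rank_eq_finrank_span_cols, LinearIndependent.rank_matrix (M := of v) h,
        Module.finrank_fin_fun, Fintype.card_fin]
    obtain ⟨ι, a, ha, hspan, hli⟩ := exists_linearIndependent' F (of v).col
    have := Finite.of_injective a ha
    have := Fintype.ofFinite ι
    have hcard : Fintype.card ι = t := by
      rw [← finrank_span_eq_card hli, hspan, hcols, finrank_top, Module.finrank_fin_fun]
    let e := Fintype.equivFinOfCardEq hcard
    refine ⟨a ∘ e.symm, ((isUnit_iff_isUnit_det _).mp ?_).ne_zero⟩
    exact linearIndependent_cols_iff_isUnit.mp (hli.comp e.symm e.symm.injective)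
  · rintro ⟨r, hr⟩
    have hrows := linearIndependent_rows_of_isUnit ((isUnit_iff_isUnit_det _).mpr (Ne.isUnit hr))
    exact LinearIndependent.of_comp (LinearMap.funLeft F F r) hrows

theorem exists_linearIndependent_finSnoc {F V ι : Type*} [Field F] [AddCommGroup V] [Module F V]
    {s m : ℕ} {c : Fin s → V} (hc : LinearIndependent F c) {a : ι → V} {g : Fin m → ι}
    (ha : LinearIndependent F (a ∘ g)) (hsm : s < m) :
    ∃ i, LinearIndependent F (Fin.snoc c (a i) : Fin (s + 1) → V) := by
  by_contra! h
  have hle : Submodule.span F (Set.range (a ∘ g)) ≤ Submodule.span F (Set.range c) := by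
    rw [Submodule.span_le]
    rintro _ ⟨l, rfl⟩
    by_contra hl
    exact h (g l) (linearIndependent_finSnoc.mpr ⟨hc, hl⟩)
  have := FiniteDimensional.span_of_finite F (Set.finite_range c)
  have := Submodule.finrank_mono hle
  rw [finrank_span_eq_card ha, finrank_span_eq_card hc, Fintype.card_fin, Fintype.card_fin] at this
  omega

end LinearAlgebra

section Minors

open Matrix

variable {R ι κ : Type*} [CommRing R]

/-- Unlike in `minorIdeal`, row and column choices need not be injective or increasing; this
only adds zeros and sign changes (`minorIdeal_eq_minorsIdeal`). -/
def minorsIdeal (t : ℕ) (v : ι → κ → R) : Ideal R :=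
  Ideal.span {d | ∃ (g : Fin t → ι) (r : Fin t → κ), (of fun l c => v (g l) (r c)).det = d}

theorem det_mem_minorsIdeal {t : ℕ} (v : ι → κ → R) (g : Fin t → ι) (r : Fin t → κ) :
    (of fun l c => v (g l) (r c)).det ∈ minorsIdeal t v :=
  Ideal.subset_span ⟨g, r, rfl⟩

@[simp]
theorem minorsIdeal_zero (v : ι → κ → R) : minorsIdeal 0 v = ⊤ :=
  (Ideal.eq_top_iff_one _).mpr (by simpa using det_mem_minorsIdeal v finZeroElim finZeroElim)

theorem minorsIdeal_comp_le {ι' : Type*} (t : ℕ) (v : ι → κ → R) (e : ι' → ι) :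
    minorsIdeal t (v ∘ e) ≤ minorsIdeal t v :=
  Ideal.span_le.mpr <| by
    rintro _ ⟨g, r, rfl⟩
    exact det_mem_minorsIdeal v (e ∘ g) r

theorem minorsIdeal_le_snoc {k t : ℕ} (v : Fin k → κ → R) (y : κ → R) :
    minorsIdeal t v ≤ minorsIdeal t (Fin.snoc v y : Fin (k + 1) → κ → R) := by
  simpa only [Fin.snoc_comp_castSucc] using minorsIdeal_comp_le t (Fin.snoc v y) Fin.castSucc

theorem exists_linearIndependent_of_not_minorsIdeal_le {F : Type*} [Field F] [Fintype κ] {t : ℕ}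
    (f : R →+* F) (v : ι → κ → R) (h : ¬ minorsIdeal t v ≤ RingHom.ker f) :
    ∃ g : Fin t → ι, LinearIndependent F fun l c => f (v (g l) c) := by
  obtain ⟨g, r, hgr⟩ : ∃ (g : Fin t → ι) (r : Fin t → κ),
      (of fun l c => v (g l) (r c)).det ∉ RingHom.ker f := by
    by_contra! h'
    exact h (Ideal.span_le.mpr fun _ ⟨g, r, hd⟩ => hd ▸ h' g r)
  refine ⟨g, (linearIndependent_iff_exists_det_ne_zero _).mpr ⟨r, ?_⟩⟩
  rwa [RingHom.mem_ker, RingHom.map_det] at hgr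

theorem exists_det_snoc_notMem {m s : ℕ} {ι' : Type*} {q : Ideal R} [q.IsPrime]
    (v : ι → Fin m → R) (a : ι' → Fin m → R) (hv : ¬ minorsIdeal s v ≤ q)
    (ha : ¬ minorsIdeal m a ≤ q) (hsm : s < m) :
    ∃ (g : Fin s → ι) (i : ι') (r : Fin (s + 1) → Fin m),
      (of fun l c => (Fin.snoc (v ∘ g) (a i) : Fin (s + 1) → Fin m → R) l (r c)).det ∉ q := by
  let f : R →+* FractionRing (R ⧸ q) := (algebraMap _ _).comp (Ideal.Quotient.mk q)
  have hf : RingHom.ker f = q := by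
    rw [RingHom.ker_comp_of_injective _ (IsFractionRing.injective _ _), Ideal.mk_ker]
  rw [← hf] at hv ha ⊢
  obtain ⟨g, hg⟩ := exists_linearIndependent_of_not_minorsIdeal_le f v hv
  obtain ⟨ga, hga⟩ := exists_linearIndependent_of_not_minorsIdeal_le f a ha
  obtain ⟨i, hi⟩ := exists_linearIndependent_finSnoc hg (a := fun i c => f (a i c)) hga hsm
  obtain ⟨r, hr⟩ := (linearIndependent_iff_exists_det_ne_zero _).mp hi
  refine ⟨g, i, r, fun hmem => hr ?_⟩
  rw [RingHom.mem_ker, RingHom.map_det] at hmem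
  rw [← hmem]
  congr 1
  ext l c
  induction l using Fin.lastCases <;> simp

end Minors

section FrozenMinors

open Matrix

variable {R : Type*} [CommRing R]

theorem det_mem_minorIdeal {m n k : ℕ} (B : Fin n → Fin m → R) {g : Fin m → Fin n}
    (hg : ∀ l, (g l : ℕ) < k) (r : Fin m → Fin m) :
    (of fun l c => B (g l) (r c)).det ∈ minorIdeal m n B k := by
  by_cases hr : Function.Injective r
  swap
  · obtain ⟨c, c', hcc', hne⟩ := Function.not_injective_iff.mp hr
    rw [det_zero_of_column_eq hne fun l => by simp [hcc']]
    exact zero_mem _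
  by_cases hginj : Function.Injective g
  swap
  · obtain ⟨l, l', hll', hne⟩ := Function.not_injective_iff.mp hginj
    rw [det_zero_of_row_eq hne (by ext; simp [hll'])]
    exact zero_mem _
  let σ := Tuple.sort g
  let ρ := Equiv.ofBijective r hr.bijective_of_finite
  have hmono : StrictMono (g ∘ σ) :=
    (Tuple.monotone_sort g).strictMono_of_injective (hginj.comp σ.injective)
  have hsorted : (of fun l c => B ((g ∘ σ) l) c).det ∈ minorIdeal m n B k := by
    rw [← det_transpose]
    exact Ideal.subset_span ⟨g ∘ σ, hmono, fun l => hg _, rfl⟩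
  have hperm : (of fun l c => B (g l) (r c)) =
      ((of fun l c => B ((g ∘ σ) l) c).submatrix σ.symm id).submatrix id ρ := by
    ext l c
    simp [ρ]
  rw [hperm, det_permute', det_permute]
  exact Ideal.mul_mem_left _ _ (Ideal.mul_mem_left _ _ hsorted)

theorem minorIdeal_eq_minorsIdeal {m n k : ℕ} (B : Fin n → Fin m → R) (hk : k ≤ n) :
    minorIdeal m n B k = minorsIdeal m fun c : Fin k => B (Fin.castLE hk c) := by
  apply le_antisymm
  · refine Ideal.span_le.mpr ?_
    rintro _ ⟨g, -, hg, rfl⟩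
    rw [← det_transpose]
    exact det_mem_minorsIdeal (fun c : Fin k => B (Fin.castLE hk c)) (fun l => ⟨g l, hg l⟩) id
  · refine Ideal.span_le.mpr ?_
    rintro _ ⟨g, r, rfl⟩
    exact det_mem_minorIdeal B (g := fun l => Fin.castLE hk (g l)) (fun l => (g l).2) r

end FrozenMinors

section Height

variable {R : Type*} [CommRing R]

theorem le_idealHeight_iff {I : Ideal R} {a : ℕ∞} :
    a ≤ idealHeight I ↔ ∀ p : PrimeSpectrum R, I ≤ p.asIdeal → a ≤ Order.height p := by
  simp only [idealHeight, le_iInf_iff]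

theorem idealHeight_le_height {I : Ideal R} {p : PrimeSpectrum R} (h : I ≤ p.asIdeal) :
    idealHeight I ≤ Order.height p :=
  iInf₂_le p h

@[simp]
theorem idealHeight_top : idealHeight (⊤ : Ideal R) = ⊤ :=
  top_le_iff.mp <| le_idealHeight_iff.mpr fun p hp => (p.2.ne_top (top_le_iff.mp hp)).elim

theorem le_idealHeight_of_forall_minimalPrimes {I J : Ideal R} (hIJ : I ≤ J) {b : ℕ∞}
    (hb : b ≤ idealHeight I + 1)
    (hJ : ∀ q : PrimeSpectrum R, q.asIdeal ∈ I.minimalPrimes → Order.height q < b →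
      ¬ J ≤ q.asIdeal) :
    b ≤ idealHeight J := by
  refine le_idealHeight_iff.mpr fun p hp => ?_
  obtain ⟨q, hq, hqp⟩ := Ideal.exists_minimalPrimes_le (hIJ.trans hp)
  let Q : PrimeSpectrum R := ⟨q, hq.1.1⟩
  by_cases hbQ : b ≤ Order.height Q
  · exact hbQ.trans (Order.height_mono (show Q ≤ p from hqp))
  have hQp : Q < p := lt_of_le_of_ne hqp fun h => hJ Q hq (not_le.mp hbQ) (h ▸ hp)
  calc b ≤ idealHeight I + 1 := hb
    _ ≤ Order.height Q + 1 := by gcongr; exact idealHeight_le_height hq.1.2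
    _ ≤ Order.height p := Order.height_add_one_le hQp

end Height

section Avoidance

open Filter IsLocalRing

variable (R M : Type*) [CommRing R] [AddCommGroup M] [Module R M]

def Filter.outsideProperSubmodules : Filter M :=
  ⨅ N : {N : Submodule R M // N ≠ ⊤}, 𝓟 (N : Set M)ᶜ

variable {R M}

theorem eventually_notMem_outsideProperSubmodules {N : Submodule R M} (hN : N ≠ ⊤) :
    ∀ᶠ x in outsideProperSubmodules R M, x ∉ N :=
  mem_iInf_of_mem ⟨N, hN⟩ (mem_principal_self _)

/-- The images of the `N ∈ s` in the vector space `M/𝔪M` over the infinite field `R/𝔪` are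
proper by Nakayama, and such a space is not a finite union of proper subspaces. -/
theorem IsLocalRing.biUnion_ne_univ_of_top_notMem [IsLocalRing R] [Infinite (ResidueField R)]
    [Module.Finite R M] {s : Finset (Submodule R M)} (hs : ⊤ ∉ s) :
    ⋃ N ∈ s, (N : Set M) ≠ Set.univ := by
  classical
  intro hcover
  let k := R ⧸ maximalIdeal R
  let := Ideal.Quotient.field (maximalIdeal R)
  have : Infinite k := ‹Infinite (ResidueField R)›
  let π := (maximalIdeal R • ⊤ : Submodule R M).mkQ
  let V : Submodule R M → Submodule k (M ⧸ (maximalIdeal R • ⊤ : Submodule R M)) :=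
    fun N => Submodule.span k (π '' N)
  have hV : ∀ N, (V N).restrictScalars R = N.map π := fun N => by
    rw [Submodule.restrictScalars_span R k Ideal.Quotient.mk_surjective, Submodule.span_image,
      Submodule.span_eq]
  have hVcover : ⋃ W ∈ s.image V, (W : Set (M ⧸ (maximalIdeal R • ⊤ : Submodule R M))) =
      Set.univ := by
    refine Set.eq_univ_of_forall fun x => ?_
    obtain ⟨y, rfl⟩ := Submodule.mkQ_surjective _ x
    obtain ⟨N, hN, hy⟩ : ∃ N ∈ s, y ∈ N := by simpa using hcover.ge (Set.mem_univ y)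
    simp only [Finset.mem_image, Set.mem_iUnion, exists_prop]
    exact ⟨V N, ⟨N, hN, rfl⟩, Submodule.subset_span (Set.mem_image_of_mem π hy)⟩
  obtain ⟨N, hN, hNtop⟩ :=
    Finset.mem_image.mp (Subspace.top_mem_of_biUnion_eq_univ (k := k) hVcover)
  apply hs
  convert hN
  rw [eq_comm, ← map_mkQ_eq_top, ← hV, hNtop, Submodule.restrictScalars_top]

instance [IsLocalRing R] [Infinite (ResidueField R)] [Module.Finite R M] :
    NeBot (outsideProperSubmodules R M) := by
  refine ⟨fun h => ?_⟩
  rw [← empty_mem_iff_bot, outsideProperSubmodules, mem_iInf_finite] at h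
  obtain ⟨s, hs⟩ := h
  rw [iInf_principal_finset, mem_principal, Set.subset_empty_iff] at hs
  refine IsLocalRing.biUnion_ne_univ_of_top_notMem (s := s.map (.subtype _)) (by simp) ?_
  refine Set.eq_univ_of_forall fun x => ?_
  by_contra hx
  exact Set.eq_empty_iff_forall_notMem.mp hs x (by simpa using hx)

end Avoidance

section NewColumn

open Filter Matrix

variable {R : Type*} [CommRing R]

def Matrix.detRowLinear {n : Type*} [Fintype n] [DecidableEq n] (M : Matrix n n R) (i : n) :
    (n → R) →ₗ[R] R :=
  (detRowAlternating : (n → R) [⋀^n]→ₗ[R] R).toMultilinearMap.toLinearMap M i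

@[simp]
theorem Matrix.detRowLinear_apply {n : Type*} [Fintype n] [DecidableEq n] (M : Matrix n n R)
    (i : n) (x : n → R) : M.detRowLinear i x = (M.updateRow i x).det :=
  rfl

theorem eventually_isUnit_updateRow [IsLocalRing R] {n : Type*} [Fintype n] [DecidableEq n]
    {W : Matrix n n R} (hW : IsUnit W) (i : n) :
    ∀ᶠ u in outsideProperSubmodules R (n → R), IsUnit (W.updateRow i u) := by
  let N := Submodule.comap (W.detRowLinear i) (IsLocalRing.maximalIdeal R)
  have hN : N ≠ ⊤ := fun h => by
    have hWi : W i ∈ N := h ▸ Submodule.mem_top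
    rw [Submodule.mem_comap, detRowLinear_apply, updateRow_eq_self] at hWi
    exact (IsLocalRing.notMem_maximalIdeal.mpr ((isUnit_iff_isUnit_det W).mp hW)) hWi
  filter_upwards [eventually_notMem_outsideProperSubmodules hN] with u hu
  rw [isUnit_iff_isUnit_det]
  exact IsLocalRing.notMem_maximalIdeal.mp hu

theorem eventually_not_minorsIdeal_snoc_le {m k s : ℕ} {ι : Type*} [Fintype ι] {q : Ideal R}
    [q.IsPrime] (v : Fin k → Fin m → R) (a : ι → Fin m → R) (hv : ¬ minorsIdeal s v ≤ q)
    (ha : ¬ minorsIdeal m a ≤ q) (hsm : s < m) :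
    ∀ᶠ u in outsideProperSubmodules R (ι → R),
      ¬ minorsIdeal (s + 1) (Fin.snoc v (∑ i, u i • a i) : Fin (k + 1) → Fin m → R) ≤ q := by
  classical
  obtain ⟨g, i, r, hdet⟩ := exists_det_snoc_notMem v a hv ha hsm
  let D : Matrix (Fin (s + 1)) (Fin (s + 1)) R :=
    of fun l c => (Fin.snoc (v ∘ g) 0 : Fin (s + 1) → Fin m → R) l (r c)
  let L := D.detRowLinear (Fin.last s) ∘ₗ LinearMap.funLeft R R r ∘ₗ
    Fintype.linearCombination R a
  have hL : ∀ u, L u = (of fun l c =>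
      (Fin.snoc (v ∘ g) (∑ i, u i • a i) : Fin (s + 1) → Fin m → R) l (r c)).det := by
    intro u
    simp only [L, D, LinearMap.comp_apply, detRowLinear_apply, Fintype.linearCombination_apply]
    congr 1
    ext l c
    induction l using Fin.lastCases <;> simp
  have hN : Submodule.comap L q ≠ ⊤ := fun h => hdet <| by
    have hi : Pi.single i 1 ∈ Submodule.comap L q := h ▸ Submodule.mem_top
    simpa [hL, Pi.single_apply] using hi
  filter_upwards [eventually_notMem_outsideProperSubmodules hN] with u hu hle
  apply hu
  rw [Submodule.mem_comap, hL]
  convert hle (det_mem_minorsIdeal _ (Fin.snoc (Fin.castSucc ∘ g) (Fin.last k)) r) using 3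
  ext l c
  induction l using Fin.lastCases <;> simp

end NewColumn

section MinorHeights

open Filter

variable {R : Type*} [CommRing R]

/-- `v` are the columns `B₁,…,B_k`; the theorem is the case `t = m`. For `t > k` the bound
`k + 1 - t` truncates to `0`. -/
def HasMinorHeights (e : ℕ) {k m : ℕ} (v : Fin k → Fin m → R) : Prop :=
  ∀ t ≤ m, ((min (k + 1 - t) e : ℕ) : ℕ∞) ≤ idealHeight (minorsIdeal t v)

theorem hasMinorHeights_of_fin_zero (e : ℕ) {m : ℕ} (v : Fin 0 → Fin m → R) :
    HasMinorHeights e v := by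
  rintro (_ | t) - <;> simp

theorem eventually_not_minorsIdeal_snoc_le_of_height_lt {e k m t : ℕ} {ι : Type*} [Fintype ι]
    {a : ι → Fin m → R} (ha : (e : ℕ∞) ≤ idealHeight (minorsIdeal m a))
    {v : Fin k → Fin m → R} (hv : HasMinorHeights e v) (ht : t ≤ m) {q : PrimeSpectrum R}
    (hq : minorsIdeal t v ≤ q.asIdeal) (hlt : Order.height q < (min (k + 1 + 1 - t) e : ℕ)) :
    ∀ᶠ u in outsideProperSubmodules R (ι → R),
      ¬ minorsIdeal t (Fin.snoc v (∑ i, u i • a i) : Fin (k + 1) → Fin m → R) ≤ q.asIdeal := by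
  obtain _ | s := t
  · exact (q.2.ne_top (top_le_iff.mp (minorsIdeal_zero v ▸ hq))).elim
  have hs : ¬ minorsIdeal s v ≤ q.asIdeal := fun h => by
    rw [show k + 1 + 1 - (s + 1) = k + 1 - s by omega] at hlt
    exact lt_irrefl _ (((hv s (by omega)).trans (idealHeight_le_height h)).trans_lt hlt)
  have ha' : ¬ minorsIdeal m a ≤ q.asIdeal := fun h => by
    have := (ha.trans (idealHeight_le_height h)).trans_lt hlt
    norm_cast at this
    omega
  exact eventually_not_minorsIdeal_snoc_le v a hs ha' ht

theorem eventually_hasMinorHeights_snoc [IsNoetherianRing R] {e k m : ℕ} {ι : Type*} [Fintype ι]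
    {a : ι → Fin m → R} (ha : (e : ℕ∞) ≤ idealHeight (minorsIdeal m a))
    {v : Fin k → Fin m → R} (hv : HasMinorHeights e v) :
    ∀ᶠ u in outsideProperSubmodules R (ι → R),
      HasMinorHeights e (Fin.snoc v (∑ i, u i • a i) : Fin (k + 1) → Fin m → R) := by
  have hfin : ∀ t, {q : PrimeSpectrum R | q.asIdeal ∈ (minorsIdeal t v).minimalPrimes}.Finite :=
    fun t => (Ideal.finite_minimalPrimes_of_isNoetherianRing R _).preimage
      fun _ _ _ _ => PrimeSpectrum.ext
  have key : ∀ t ≤ m, ∀ q : PrimeSpectrum R, q.asIdeal ∈ (minorsIdeal t v).minimalPrimes →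
      ∀ᶠ u in outsideProperSubmodules R (ι → R),
        Order.height q < (min (k + 1 + 1 - t) e : ℕ) →
        ¬ minorsIdeal t (Fin.snoc v (∑ i, u i • a i) : Fin (k + 1) → Fin m → R) ≤ q.asIdeal := by
    intro t ht q hq
    by_cases hlt : Order.height q < (min (k + 1 + 1 - t) e : ℕ)
    · filter_upwards [eventually_not_minorsIdeal_snoc_le_of_height_lt ha hv ht hq.1.2 hlt]
        with u hu _ using hu
    · exact Eventually.of_forall fun _ h => (hlt h).elim
  filter_upwards [(Set.finite_le_nat m).eventually_all.mpr fun t ht =>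
    (hfin t).eventually_all.mpr (key t ht)] with u hu t ht
  refine le_idealHeight_of_forall_minimalPrimes (minorsIdeal_le_snoc v _) ?_ (hu t ht)
  calc ((min (k + 1 + 1 - t) e : ℕ) : ℕ∞) ≤ ((min (k + 1 - t) e + 1 : ℕ) : ℕ∞) := by
        exact_mod_cast (by omega)
    _ ≤ idealHeight (minorsIdeal t v) + 1 := by
        push_cast
        gcongr
        exact hv t ht

end MinorHeights

section Construction

open Matrix

variable {R : Type*} [CommRing R]

theorem exists_isUnit_hasMinorHeights [IsLocalRing R] [IsNoetherianRing R]
    [Infinite (IsLocalRing.ResidueField R)] {e m n : ℕ} {a : Fin n → Fin m → R}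
    (ha : (e : ℕ∞) ≤ idealHeight (minorsIdeal m a)) :
    ∃ W : Matrix (Fin n) (Fin n) R, IsUnit W ∧
      ∀ k (hk : k ≤ n), HasMinorHeights e fun c : Fin k => ∑ l, W (Fin.castLE hk c) l • a l := by
  suffices h : ∀ k ≤ n, ∃ W : Matrix (Fin n) (Fin n) R, IsUnit W ∧ ∀ k' (hk' : k' ≤ n), k' ≤ k →
      HasMinorHeights e fun c : Fin k' => ∑ l, W (Fin.castLE hk' c) l • a l from
    (h n le_rfl).imp fun W hW => ⟨hW.1, fun k hk => hW.2 k hk hk⟩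
  intro k
  induction k with
  | zero =>
    refine fun _ => ⟨1, isUnit_one, fun k' _ hk' => ?_⟩
    obtain rfl : k' = 0 := by omega
    exact hasMinorHeights_of_fin_zero e _
  | succ k ih =>
    intro hk
    obtain ⟨W, hW, hWk⟩ := ih (by omega)
    let j : Fin n := ⟨k, hk⟩
    obtain ⟨u, hu, hnew⟩ := ((eventually_isUnit_updateRow hW j).and
      (eventually_hasMinorHeights_snoc ha (hWk k (by omega) le_rfl))).exists
    refine ⟨W.updateRow j u, hu, fun k' hk' hk'k => ?_⟩
    obtain hlt | rfl := hk'k.lt_or_eq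
    · convert hWk k' hk' (by omega) using 4 with c
      have hc : Fin.castLE hk' c ≠ j := Fin.ne_of_val_ne (by simp [j]; omega)
      rw [updateRow_ne hc]
    · convert hnew using 2 with c
      induction c using Fin.lastCases with
      | last =>
        rw [Fin.snoc_last, show Fin.castLE hk' (Fin.last k) = j from rfl, updateRow_self]
      | cast c =>
        rw [Fin.snoc_castSucc, updateRow_ne (Fin.ne_of_val_ne (by simp [j]; omega))]
        rfl

end Construction

theorem exists_column_transformation_generic_heights_general
    {R : Type*} [CommRing R] [IsLocalRing R] [IsNoetherianRing R]
    (hres : Infinite (IsLocalRing.ResidueField R))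
    (m n : ℕ) (A : Fin n → (Fin m → R))
    (hht : ((n - m : ℕ) : ℕ∞) ≤ idealHeight (minorIdeal m n A n)) :
    ∃ φ : Matrix (Fin n) (Fin n) R, IsUnit φ ∧
      ∀ k : ℕ, m + 1 ≤ k → k ≤ n - 1 →
        ((k - m + 1 : ℕ) : ℕ∞) ≤
          idealHeight (minorIdeal m n
            (fun j i => ((Matrix.of fun i' j' => A j' i') * φ) i j) k) := by
  rw [minorIdeal_eq_minorsIdeal A le_rfl] at hht
  simp only [Fin.castLE_refl] at hht
  obtain ⟨W, hW, hWA⟩ := exists_isUnit_hasMinorHeights hht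
  refine ⟨W.transpose, (Matrix.isUnit_transpose W).mpr hW, fun k hmk hkn => ?_⟩
  have hk : k ≤ n := by omega
  have hB : (fun (c : Fin k) i => ((Matrix.of fun i' j' => A j' i') * W.transpose) i
      (Fin.castLE hk c)) = fun c => ∑ l, W (Fin.castLE hk c) l • A l := by
    ext c i
    simp [Matrix.mul_apply, Finset.sum_apply, mul_comm]
  rw [minorIdeal_eq_minorsIdeal _ hk, hB]
  convert hWA k hk m le_rfl using 2
  omega

/-- **Lemma 2.** Let `(R, 𝔪)` be a Noetherian local Cohen–Macaulay ring with infinite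
residue field and `A` an `m × n` matrix (`m < n`) with entries in `𝔪` such that
`ht I_m(A₁,…,Aₙ) ≥ n − m`. Then there is an invertible `n × n` matrix `φ` such that the
matrix `B = A·φ` satisfies `ht I_m(B₁,…,B_k) ≥ k − m + 1` for `k = m+1, …, n−1`. -/
theorem exists_column_transformation_generic_heights
    {R : Type*} [CommRing R] [IsLocalRing R] [IsNoetherianRing R]
    (hCM : IsCohenMacaulayLocalRing R)
    (hres : Infinite (IsLocalRing.ResidueField R))
    (m n : ℕ) (hmn : m < n) (A : Fin n → (Fin m → R))
    (hA : ∀ j i, A j i ∈ IsLocalRing.maximalIdeal R)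
    (hht : ((n - m : ℕ) : ℕ∞) ≤ idealHeight (minorIdeal m n A n)) :
    ∃ φ : Matrix (Fin n) (Fin n) R, IsUnit φ ∧
      ∀ k : ℕ, m + 1 ≤ k → k ≤ n - 1 →
        ((k - m + 1 : ℕ) : ℕ∞) ≤
          idealHeight (minorIdeal m n
            (fun j i => ((Matrix.of fun i' j' => A j' i') * φ) i j) k) :=
  exists_column_transformation_generic_heights_general hres m n A hht
end

section
/- The characteristic polynomial p(X) of M is an even polynomial: p composed with −X equals p, i.e. charpoly(M).comp(−X) = charpoly(M) in R[X]. -/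
open Polynomial

/-- The characteristic polynomial of the block matrix `M = [[α, β], [β, -α]]`
is an even polynomial: `p(-X) = p(X)`. -/
theorem charpoly_fromBlocks_even {R : Type*} [CommRing R] (r : ℕ)
    (α β : Matrix (Fin r) (Fin r) R)
    (M : Matrix (Fin r ⊕ Fin r) (Fin r ⊕ Fin r) R)
    (hM : M = Matrix.fromBlocks α β β (-α)) :
    M.charpoly.comp (-Polynomial.X) = M.charpoly := by
  classical
  let φ : R[X] →+* R[X] := eval₂RingHom Polynomial.C (-Polynomial.X)
  let J : Matrix (Fin r ⊕ Fin r) (Fin r ⊕ Fin r) R[X] := Matrix.fromBlocks 0 1 (-1) 0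
  have hJJ : J * J = -1 := by
    show Matrix.fromBlocks 0 1 (-1) 0 * Matrix.fromBlocks 0 1 (-1) 0 = -1
    rw [Matrix.fromBlocks_multiply, ← Matrix.fromBlocks_one, Matrix.fromBlocks_neg]
    congr 1 <;> simp
  have hN : J * ((Polynomial.C : R →+* R[X]).mapMatrix M) * J
      = (Polynomial.C : R →+* R[X]).mapMatrix M := by
    subst hM
    show Matrix.fromBlocks 0 1 (-1) 0 *
        ((Matrix.fromBlocks α β β (-α)).map Polynomial.C) * Matrix.fromBlocks 0 1 (-1) 0
      = (Matrix.fromBlocks α β β (-α)).map Polynomial.C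
    rw [Matrix.fromBlocks_map, Matrix.fromBlocks_multiply, Matrix.fromBlocks_multiply]
    simp only [← RingHom.mapMatrix_apply, map_neg, neg_neg]
    congr 1 <;> simp
  have hscalar : J * (Matrix.scalar (Fin r ⊕ Fin r) (X : R[X])) * J
      = -(Matrix.scalar (Fin r ⊕ Fin r) (X : R[X])) := by
    rw [(Matrix.scalar_commute (X : R[X]) (Commute.all _) J).symm.eq, mul_assoc, hJJ]
    simp
  have key : (M.charmatrix).map φ = J * M.charmatrix * J := by
    have h1 : (M.charmatrix).map φ
        = -(Matrix.scalar (Fin r ⊕ Fin r) (X : R[X]))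
          - (Polynomial.C : R →+* R[X]).mapMatrix M := by
      ext i j
      simp only [Matrix.charmatrix, Matrix.map_apply, Matrix.sub_apply,
        Matrix.scalar_apply, Matrix.neg_apply, RingHom.mapMatrix_apply]
      rcases eq_or_ne i j with h | h
      · subst h; simp [φ, Matrix.diagonal_apply_eq]
      · simp [φ, Matrix.diagonal_apply_ne _ h]
    rw [h1, Matrix.charmatrix, mul_sub, sub_mul, hscalar, hN]
  have hcard : Fintype.card (Fin r ⊕ Fin r) = 2 * r := by simp [two_mul]
  calc M.charpoly.comp (-Polynomial.X)
      = φ M.charpoly := rfl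
    _ = ((M.charmatrix).map φ).det := by
        rw [Matrix.charpoly]; exact (RingHom.map_det φ _).trans (by rfl)
    _ = (J * M.charmatrix * J).det := by rw [key]
    _ = J.det * M.charmatrix.det * J.det := by rw [Matrix.det_mul, Matrix.det_mul]
    _ = M.charmatrix.det * (J * J).det := by rw [Matrix.det_mul]; ring
    _ = M.charpoly := by
        rw [hJJ, Matrix.det_neg, Matrix.det_one, hcard]
        simp [Matrix.charpoly, pow_mul]
end

section
/- Suppose α and β are symmetric real r×r matrices, so that M is a symmetric (hence Hermitian) real 2r×2r matrix. Then the number of positive eigenvalues of M equals the number of negative eigenvalues of M (eigenvalues counted with multiplicity); in particular the signature of M, i.e. the number of positive minus the number of negative eigenvalues, is zero. -/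
open Matrix Polynomial

private lemma charpoly_conj_aux {n R : Type*} [Fintype n] [DecidableEq n] [CommRing R]
    (P A Q : Matrix n n R) (h1 : P * Q = 1) (h2 : Q * P = 1) :
    (P * A * Q).charpoly = A.charpoly := by
  have e1 : (C : R →+* R[X]).mapMatrix (P * A * Q) =
      (C : R →+* R[X]).mapMatrix P * (C : R →+* R[X]).mapMatrix A
        * (C : R →+* R[X]).mapMatrix Q := by
    rw [RingHom.map_mul, RingHom.map_mul]
  have ePQ : (C : R →+* R[X]).mapMatrix P * (C : R →+* R[X]).mapMatrix Q = 1 := by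
    rw [← RingHom.map_mul, h1, RingHom.map_one]
  have eQP : (C : R →+* R[X]).mapMatrix Q * (C : R →+* R[X]).mapMatrix P = 1 := by
    rw [← RingHom.map_mul, h2, RingHom.map_one]
  have hmat : charmatrix (P * A * Q) =
      (C : R →+* R[X]).mapMatrix P * charmatrix A * (C : R →+* R[X]).mapMatrix Q := by
    unfold charmatrix
    rw [mul_sub, sub_mul, e1]
    congr 1
    rw [Matrix.scalar_apply, ← Matrix.smul_one_eq_diagonal, Matrix.mul_smul, Matrix.smul_mul,
      mul_one, ePQ]
  have hdet : (charmatrix (P * A * Q)).det = (charmatrix A).det := by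
    rw [hmat, Matrix.det_mul, Matrix.det_mul, mul_right_comm, ← Matrix.det_mul, ePQ,
      Matrix.det_one, one_mul]
  simpa [Matrix.charpoly] using hdet

private lemma charpoly_diagonal_aux {n R : Type*} [Fintype n] [DecidableEq n] [CommRing R]
    (d : n → R) :
    (Matrix.diagonal d).charpoly = ∏ i, (X - C (d i)) := by
  have : charmatrix (Matrix.diagonal d) = Matrix.diagonal fun i => X - C (d i) := by
    ext i j
    by_cases h : i = j
    · subst h; simp
    · simp [h, Matrix.diagonal_apply_ne _ h]
  rw [Matrix.charpoly, this, Matrix.det_diagonal]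

open Matrix

/-- If `α, β` are symmetric real `r × r` matrices, then the symmetric (hence Hermitian)
block matrix `M = [[α, β], [β, -α]]` has as many positive as negative eigenvalues
(counted with multiplicity); in particular its signature is zero. -/
theorem fromBlocks_signature_zero (r : ℕ) (α β : Matrix (Fin r) (Fin r) ℝ)
    (hα : α.IsSymm) (hβ : β.IsSymm)
    (hM : (Matrix.fromBlocks α β β (-α)).IsHermitian) :
    (Finset.univ.filter fun i : Fin r ⊕ Fin r => 0 < hM.eigenvalues i).card =
      (Finset.univ.filter fun i : Fin r ⊕ Fin r => hM.eigenvalues i < 0).card := by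
  classical
  set M : Matrix (Fin r ⊕ Fin r) (Fin r ⊕ Fin r) ℝ := Matrix.fromBlocks α β β (-α) with hMdef
  set U : Matrix (Fin r ⊕ Fin r) (Fin r ⊕ Fin r) ℝ := (hM.eigenvectorUnitary : Matrix (Fin r ⊕ Fin r) (Fin r ⊕ Fin r) ℝ)
  have hUU : U * star U = 1 := (Matrix.mem_unitaryGroup_iff).mp hM.eigenvectorUnitary.2
  have hUU' : star U * U = 1 := (Matrix.mem_unitaryGroup_iff').mp hM.eigenvectorUnitary.2
  have hdiag : Matrix.diagonal ((RCLike.ofReal : ℝ → ℝ) ∘ hM.eigenvalues) =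
      Matrix.diagonal hM.eigenvalues := by
    congr 1
  have hspec : M = U * Matrix.diagonal hM.eigenvalues * star U := by
    have := hM.spectral_theorem
    rwa [hdiag] at this
  -- charpoly of M
  have hcp : M.charpoly = ∏ i, (X - C (hM.eigenvalues i)) := by
    conv_lhs => rw [hspec]
    rw [charpoly_conj_aux _ _ _ hUU hUU', charpoly_diagonal_aux]
  -- charpoly of -M
  have hspecneg : -M = U * Matrix.diagonal (fun i => -hM.eigenvalues i) * star U := by
    have hd : Matrix.diagonal (fun i => -hM.eigenvalues i) = -Matrix.diagonal hM.eigenvalues := by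
      rw [← Matrix.diagonal_neg]
    rw [hd, Matrix.mul_neg, Matrix.neg_mul]
    conv_lhs => rw [hspec]
  have hcpneg : (-M).charpoly = ∏ i, (X - C (-hM.eigenvalues i)) := by
    conv_lhs => rw [hspecneg]
    rw [charpoly_conj_aux _ _ _ hUU hUU', charpoly_diagonal_aux]
  -- M is conjugate to -M via J
  set J : Matrix (Fin r ⊕ Fin r) (Fin r ⊕ Fin r) ℝ :=
    Matrix.fromBlocks 0 1 (-1) 0 with hJ
  have hJJ : J * Jᵀ = 1 := by
    simp [hJ, Matrix.fromBlocks_transpose, Matrix.fromBlocks_multiply,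
      ← Matrix.fromBlocks_one]
  have hJJ' : Jᵀ * J = 1 := by
    simp [hJ, Matrix.fromBlocks_transpose, Matrix.fromBlocks_multiply,
      ← Matrix.fromBlocks_one]
  have hconj : J * M * Jᵀ = -M := by
    simp [hJ, hMdef, Matrix.fromBlocks_transpose, Matrix.fromBlocks_multiply,
      Matrix.fromBlocks_neg]
  have hcpeq : M.charpoly = (-M).charpoly := by
    rw [← hconj, charpoly_conj_aux _ _ _ hJJ hJJ']
  -- compare root multisets
  have e : ∀ f : (Fin r ⊕ Fin r) → ℝ,
      ((Finset.univ.val.map fun i => X - C (f i)).prod).roots = Finset.univ.val.map f := by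
    intro f
    have : (Finset.univ.val.map fun i => X - C (f i)) =
        Multiset.map (fun a => X - C a) (Finset.univ.val.map f) := by
      rw [Multiset.map_map]; rfl
    rw [this, Polynomial.roots_multiset_prod_X_sub_C]
  have h1 : (∏ i, (X - C (hM.eigenvalues i))) = ∏ i, (X - C (-hM.eigenvalues i)) := by
    rw [← hcp, ← hcpneg, hcpeq]
  rw [Finset.prod_eq_multiset_prod, Finset.prod_eq_multiset_prod] at h1
  have h2 := congrArg Polynomial.roots h1
  have hroots : (Finset.univ.val.map hM.eigenvalues) =
      (Finset.univ.val.map fun i => -hM.eigenvalues i) :=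
    (e hM.eigenvalues).symm.trans (h2.trans (e fun i => -hM.eigenvalues i))
  -- count
  have key : Multiset.countP (fun x : ℝ => 0 < x) (Finset.univ.val.map hM.eigenvalues) =
      Multiset.countP (fun x : ℝ => 0 < x)
        (Finset.univ.val.map fun i => -hM.eigenvalues i) := by rw [← hroots]
  rw [Multiset.countP_map, Multiset.countP_map] at key
  simp only [Finset.card_filter]
  simpa [Finset.filter, Multiset.countP_eq_card_filter, neg_pos] using key
end

section
/- Let B : W × W → ℂ be a symmetric ℂ-bilinear form satisfying B(σ(x), σ(y)) = conj(B(x, y)) for all x, y ∈ W. Suppose in addition that U ⊆ W is a complex subspace with W = U ⊕ σ(U) (internal direct sum) and that B(u, σ(u')) = 0 for all u, u' ∈ U. Then there exists an ℝ-linear automorphism T of V₊ such that B(T(x), T(y)) = −B(x, y) for all x, y ∈ V₊; in particular, if W is finite-dimensional, the real symmetric bilinear form obtained by restricting B to V₊ has signature zero. -/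
/-- Let `W` be a complex vector space with a conjugate-linear involution `σ`, and let
`B` be a symmetric ℂ-bilinear form on `W` with `B (σ x) (σ y) = conj (B x y)`.
Suppose `U` is a complex subspace with `W = U ⊕ σ(U)` (internal direct sum) and
`B u (σ u') = 0` for all `u, u' ∈ U`. Then there is an ℝ-linear automorphism `T` of the
fixed space `V₊ = {w | σ w = w}` with `B (T x) (T y) = -B x y` for all `x, y ∈ V₊`;
in particular the restriction of `B` to `V₊` has signature zero. -/
theorem neg_selfcongruence_of_isotropic_decomposition
    {W : Type*} [AddCommGroup W] [Module ℂ W]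
    (σ : W → W)
    (hadd : ∀ x y : W, σ (x + y) = σ x + σ y)
    (hsmul : ∀ (c : ℂ) (w : W), σ (c • w) = (starRingEnd ℂ) c • σ w)
    (hinv : ∀ w : W, σ (σ w) = w)
    (B : W →ₗ[ℂ] W →ₗ[ℂ] ℂ)
    (hsymm : ∀ x y : W, B x y = B y x)
    (hcompat : ∀ x y : W, B (σ x) (σ y) = (starRingEnd ℂ) (B x y))
    (U : Submodule ℂ W)
    (hspan : ∀ w : W, ∃ u ∈ U, ∃ u' ∈ U, w = u + σ u')
    (hindep : ∀ u ∈ U, ∀ u' ∈ U, u + σ u' = 0 → u = 0 ∧ u' = 0)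
    (horth : ∀ u ∈ U, ∀ u' ∈ U, B u (σ u') = 0) :
    ∃ T : W → W,
      (∀ x : W, σ x = x → σ (T x) = T x) ∧
      Set.BijOn T {w : W | σ w = w} {w : W | σ w = w} ∧
      (∀ x y : W, σ x = x → σ y = y → T (x + y) = T x + T y) ∧
      (∀ (r : ℝ) (x : W), σ x = x → T (r • x) = r • T x) ∧
      (∀ x y : W, σ x = x → σ y = y → B (T x) (T y) = -B x y) := by
  classical
  -- basic properties of σ
  have hzero : σ 0 = 0 := by
    have h := hadd 0 0
    rw [add_zero] at h
    exact add_eq_left.mp h.symm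
  have hneg : ∀ x : W, σ (-x) = -σ x := by
    intro x
    have h := hadd x (-x)
    rw [add_neg_cancel, hzero] at h
    exact (neg_eq_of_add_eq_zero_right h.symm).symm
  have hsub : ∀ x y : W, σ (x - y) = σ x - σ y := by
    intro x y
    rw [sub_eq_add_neg, hadd, hneg, sub_eq_add_neg]
  -- choose the decomposition
  choose u hu u' hu' hw using hspan
  -- uniqueness of the decomposition
  have huniq : ∀ (w a b : W), a ∈ U → b ∈ U → w = a + σ b → u w = a ∧ u' w = b := by
    intro w a b ha hb hab
    have heq : u w + σ (u' w) = a + σ b := by rw [← hw w, ← hab]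
    have h0 : (u w - a) + σ (u' w - b) = 0 := by
      rw [hsub, sub_add_sub_comm, heq, sub_self]
    have h := hindep _ (Submodule.sub_mem U (hu w) ha) _ (Submodule.sub_mem U (hu' w) hb) h0
    exact ⟨sub_eq_zero.mp h.1, sub_eq_zero.mp h.2⟩
  -- on fixed points, the decomposition is symmetric
  have hfix : ∀ x : W, σ x = x → x = u x + σ (u x) := by
    intro x hx
    have hdec : x = u' x + σ (u x) := by
      conv_lhs => rw [← hx, hw x]
      rw [hadd, hinv, add_comm]
    have h := huniq x (u' x) (u x) (hu' x) (hu x) hdec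
    conv_lhs => rw [hw x, h.2]
  -- the map T
  set T : W → W := fun w => Complex.I • u w - Complex.I • σ (u w) with hT
  have hTalt : ∀ w : W, T w = Complex.I • u w + σ (Complex.I • u w) := by
    intro w
    rw [hsmul, Complex.conj_I, neg_smul, ← sub_eq_add_neg]
  have hTfix : ∀ w : W, σ (T w) = T w := by
    intro w
    rw [hTalt w, hadd, hinv, add_comm]
  have huadd : ∀ x y : W, σ x = x → σ y = y → u (x + y) = u x + u y := by
    intro x y hx hy
    refine (huniq (x + y) (u x + u y) (u x + u y)
      (Submodule.add_mem U (hu x) (hu y)) (Submodule.add_mem U (hu x) (hu y)) ?_).1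
    conv_lhs => rw [hfix x hx, hfix y hy]
    rw [hadd]
    abel
  have husmul : ∀ (c : ℂ), (starRingEnd ℂ) c = c → ∀ x : W, σ x = x →
      u (c • x) = c • u x := by
    intro c hc x hx
    refine (huniq (c • x) (c • u x) (c • u x)
      (Submodule.smul_mem U c (hu x)) (Submodule.smul_mem U c (hu x)) ?_).1
    conv_lhs => rw [hfix x hx]
    rw [smul_add, hsmul, hc]
  have hTu : ∀ x : W, σ x = x → u (T x) = Complex.I • u x := by
    intro x hx
    exact (huniq (T x) (Complex.I • u x) (Complex.I • u x)
      (Submodule.smul_mem U _ (hu x)) (Submodule.smul_mem U _ (hu x)) (hTalt x)).1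
  have hTT : ∀ x : W, σ x = x → T (T x) = -x := by
    intro x hx
    show Complex.I • u (T x) - Complex.I • σ (u (T x)) = -x
    simp only [hTu x hx, hsmul, Complex.conj_I, neg_smul, smul_neg, smul_smul,
      Complex.I_mul_I, neg_one_smul, one_smul, neg_neg]
    rw [show -x = -(u x + σ (u x)) from by rw [← hfix x hx]]
    abel
  refine ⟨T, fun x _ => hTfix x, ⟨fun x _ => hTfix x, fun x hx y hy h => ?_, fun y hy => ?_⟩,
    ?_, ?_, ?_⟩
  · -- injectivity
    have h1 := hTT x hx
    rw [h, hTT y hy] at h1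
    exact neg_injective h1.symm
  · -- surjectivity
    have hy' : σ (-y) = -y := by rw [hneg, hy]
    exact ⟨T (-y), hTfix _, by rw [hTT (-y) hy', neg_neg]⟩
  · -- additivity
    intro x y hx hy
    show Complex.I • u (x + y) - Complex.I • σ (u (x + y)) =
      (Complex.I • u x - Complex.I • σ (u x)) + (Complex.I • u y - Complex.I • σ (u y))
    rw [huadd x y hx hy, hadd, smul_add, smul_add]
    abel
  · -- real scalars
    intro r x hx
    have hrc : (r : ℝ) • x = ((r : ℂ)) • x := (Complex.coe_smul r x).symm
    have hc : (starRingEnd ℂ) (r : ℂ) = (r : ℂ) := Complex.conj_ofReal r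
    show T (r • x) = r • T x
    rw [hrc]
    show Complex.I • u ((r : ℂ) • x) - Complex.I • σ (u ((r : ℂ) • x)) = r • T x
    rw [husmul _ hc x hx, hsmul, hc, smul_comm, smul_comm Complex.I ((r : ℂ)), ← smul_sub]
    rw [show (T x : W) = Complex.I • u x - Complex.I • σ (u x) from rfl, Complex.coe_smul]
  · -- the form
    intro x y hx hy
    have ha0 : B (u x) (σ (u y)) = 0 := horth _ (hu x) _ (hu y)
    have hb0 : B (σ (u x)) (u y) = 0 := by rw [hsymm]; exact horth _ (hu y) _ (hu x)
    have hc : B (σ (u x)) (σ (u y)) = (starRingEnd ℂ) (B (u x) (u y)) := hcompat _ _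
    have hL : B (T x) (T y) =
        - B (u x) (u y) - (starRingEnd ℂ) (B (u x) (u y)) := by
      show B (Complex.I • u x - Complex.I • σ (u x))
        (Complex.I • u y - Complex.I • σ (u y)) = _
      simp only [map_sub, map_smul, LinearMap.sub_apply, LinearMap.smul_apply,
        smul_eq_mul, ha0, hb0, hc, mul_zero]
      ring_nf
      rw [Complex.I_sq]
      ring
    have hR : B x y = B (u x) (u y) + (starRingEnd ℂ) (B (u x) (u y)) := by
      conv_lhs => rw [hfix x hx, hfix y hy]
      simp only [map_add, LinearMap.add_apply, ha0, hb0, hc, add_zero, zero_add]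
    rw [hL, hR]
    ring
end
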